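/- arXiv:1611.03913 — 2 statements merged into one kernel-verified Lean document; each statement's English description precedes it below -/
import Mathlib

section
/- Let T > 0, c₀ > 0, M₀ > 0, and define u₀(t) = (M₀/c₀)(c₀ e^{c₀(T−t)} + e^{c₀(T−t)} − 1) for t ∈ [0,T]. Then for any m ≥ 1 and any t ∈ [0,T]: e^{−m(T−t)} M₀ + M₀ ∫₀^{T−t} e^{−ms} ds + ∫₀^{T−t} e^{−ms} m u₀(t+s) ds + ∫₀^{T−t} e^{−ms} (M₀/c₀)(c₀ e^{c₀(T−t−s)} + e^{c₀(T−t−s)} − 1) c₀ ds ≤ u₀(t). -/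
open Real MeasureTheory

lemma int_exp_aux (c : ℝ) (hc : c ≠ 0) (b : ℝ) :
    ∫ x in (0:ℝ)..b, Real.exp (c * x) = (Real.exp (c * b) - 1) / c := by
  have h : ∀ x ∈ Set.uIcc (0:ℝ) b, HasDerivAt (fun x => Real.exp (c * x) / c) (Real.exp (c * x)) x := by
    intro x _
    have := ((hasDerivAt_id x).const_mul c).exp
    simpa [mul_comm, mul_div_assoc, mul_div_cancel_left₀ _ hc] using this.div_const c
  rw [intervalIntegral.integral_eq_sub_of_hasDerivAt h
    ((Real.continuous_exp.comp (continuous_const.mul continuous_id)).intervalIntegrable 0 b)]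
  simp [sub_div]

lemma intg_aux (A c a b : ℝ) :
    IntervalIntegrable (fun s => A * Real.exp (c * s)) MeasureTheory.volume a b :=
  (continuous_const.mul (Real.continuous_exp.comp (continuous_const.mul continuous_id))).intervalIntegrable a b

/-- The key computational inequality in the value-iteration argument. -/
theorem bellman_step_preserves_bound
    (T c₀ M₀ : ℝ) (hT : 0 < T) (hc₀ : 0 < c₀) (hM₀ : 0 < M₀)
    (u₀ : ℝ → ℝ)
    (hu₀ : ∀ t, u₀ t = (M₀ / c₀) * (c₀ * Real.exp (c₀ * (T - t))
        + Real.exp (c₀ * (T - t)) - 1))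
    (m : ℝ) (hm : 1 ≤ m) (t : ℝ) (ht : t ∈ Set.Icc 0 T) :
    Real.exp (-m * (T - t)) * M₀
      + M₀ * (∫ s in (0:ℝ)..(T - t), Real.exp (-m * s))
      + (∫ s in (0:ℝ)..(T - t), Real.exp (-m * s) * m * u₀ (t + s))
      + (∫ s in (0:ℝ)..(T - t), Real.exp (-m * s) * ((M₀ / c₀)
          * (c₀ * Real.exp (c₀ * (T - t - s)) + Real.exp (c₀ * (T - t - s)) - 1)) * c₀)
      ≤ u₀ t := by
  have hm0 : (0:ℝ) < m := lt_of_lt_of_le one_pos hm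
  have hmne : m ≠ 0 := ne_of_gt hm0
  have hkne : m + c₀ ≠ 0 := by positivity
  have hcne : c₀ ≠ 0 := ne_of_gt hc₀
  set τ := T - t with hτ
  have e1 : (∫ s in (0:ℝ)..τ, Real.exp (-m * s)) = (Real.exp (-m * τ) - 1) / (-m) :=
    int_exp_aux (-m) (neg_ne_zero.mpr hmne) τ
  have e2 : (∫ s in (0:ℝ)..τ, Real.exp (-m * s) * m * u₀ (t + s))
      = ∫ s in (0:ℝ)..τ, ((m * (M₀ * (c₀ + 1) / c₀) * Real.exp (c₀ * τ)) * Real.exp (-(m + c₀) * s)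
          - (m * (M₀ / c₀)) * Real.exp (-m * s)) := by
    apply intervalIntegral.integral_congr
    intro s _
    beta_reduce
    rw [hu₀, show c₀ * (T - (t + s)) = c₀ * τ + -(c₀ * s) by rw [hτ]; ring, Real.exp_add,
      show -(m + c₀) * s = -m * s + -(c₀ * s) by ring, Real.exp_add]
    ring
  have e3 : (∫ s in (0:ℝ)..τ, Real.exp (-m * s) * ((M₀ / c₀)
          * (c₀ * Real.exp (c₀ * (T - t - s)) + Real.exp (c₀ * (T - t - s)) - 1)) * c₀)
      = ∫ s in (0:ℝ)..τ, ((c₀ * (M₀ * (c₀ + 1) / c₀) * Real.exp (c₀ * τ)) * Real.exp (-(m + c₀) * s)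
          - (c₀ * (M₀ / c₀)) * Real.exp (-m * s)) := by
    apply intervalIntegral.integral_congr
    intro s _
    beta_reduce
    rw [show c₀ * (T - t - s) = c₀ * τ + -(c₀ * s) by rw [hτ]; ring, Real.exp_add,
      show -(m + c₀) * s = -m * s + -(c₀ * s) by ring, Real.exp_add]
    ring
  have knne : -(m + c₀) ≠ 0 := neg_ne_zero.mpr hkne
  have mnne : (-m : ℝ) ≠ 0 := neg_ne_zero.mpr hmne
  have ev : ∀ A B : ℝ, (∫ s in (0:ℝ)..τ, (A * Real.exp (-(m + c₀) * s)
        - B * Real.exp (-m * s)))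
      = A * ((Real.exp (-(m + c₀) * τ) - 1) / (-(m + c₀)))
        - B * ((Real.exp (-m * τ) - 1) / (-m)) := by
    intro A B
    rw [intervalIntegral.integral_sub (intg_aux A _ _ _) (intg_aux B _ _ _),
      intervalIntegral.integral_const_mul, intervalIntegral.integral_const_mul,
      int_exp_aux _ knne, int_exp_aux _ mnne]
  have hE : Real.exp (-(m + c₀) * τ) = Real.exp (-m * τ) / Real.exp (c₀ * τ) := by
    rw [← Real.exp_sub]; congr 1; ring
  rw [e1, e2, e3, ev, ev, hu₀ t, ← hτ, hE]
  apply le_of_eq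
  set Y := Real.exp (c₀ * τ) with hY
  set X := Real.exp (-m * τ) with hX
  have hy : Y ≠ 0 := Real.exp_ne_zero _
  have hd1 : -(m * Y) - c₀ * Y ≠ 0 := by
    have h : -(m * Y) - c₀ * Y = -((m + c₀) * Y) := by ring
    rw [h]; exact neg_ne_zero.mpr (mul_ne_zero hkne hy)
  have hd2 : -(m * c₀ * Y) - c₀ ^ 2 * Y ≠ 0 := by
    have h : -(m * c₀ * Y) - c₀ ^ 2 * Y = -((m + c₀) * c₀ * Y) := by ring
    rw [h]; exact neg_ne_zero.mpr (mul_ne_zero (mul_ne_zero hkne hcne) hy)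
  field_simp [hd1, hd2]
  have h3 : (-c₀ + -m : ℝ) ≠ 0 := by intro h; exact hkne (by linarith)
  ring
end

section
/- Suppose u : [0,T] × S → ℝ is such that u(T,·) = g, and for all x and almost every t ∈ [0,T], u'(t,x) + ∫_A r(t,x,a,μ) π(da|x,t) + ∫_S u(t,y) ∫_A q(dy|t,x,a,μ) π(da|x,t) ≥ 0 for every admissible μ. Then, assuming the Dynkin-type identity E_x[u(T,ξ_T)] − u(0,x) = E_x[∫₀^T (u'(t,ξ_t) + ∫_S u(t,y) q(dy|t,ξ_t, π, ψ)) dt] holds for every opponent policy ψ, it follows that u(0,x) ≤ E_x[∫₀^T r(t,ξ_t,π,ψ) dt] + E_x[g(ξ_T)] = W(x,π,ψ) for every ψ, hence u(0,x) ≤ inf_ψ W(x,π,ψ) ≤ L(x). -/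
open MeasureTheory Real

lemma neg_intervalIntegral_le_of_nonneg_add {a b : ℝ} (hab : a ≤ b) {f g : ℝ → ℝ}
    (hf : IntegrableOn f (Set.Icc a b)) (hg : IntegrableOn g (Set.Icc a b))
    (hfg : ∀ᵐ t ∂(volume.restrict (Set.Icc a b)), 0 ≤ f t + g t) :
    -(∫ t in a..b, f t) ≤ ∫ t in a..b, g t := by
  rw [← intervalIntegral.integral_neg]
  refine intervalIntegral.integral_mono_ae_restrict hab
    ((intervalIntegrable_iff_integrableOn_Icc_of_le hab).2 hf.neg)
    ((intervalIntegrable_iff_integrableOn_Icc_of_le hab).2 hg) ?_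
  filter_upwards [hfg] with t ht
  linarith

lemma le_integral_add_of_sub_eq_integral {Ω : Type*} [MeasurableSpace Ω] {μ : Measure Ω}
    {A B : Ω → ℝ} (hA : Integrable A μ) (hB : Integrable B μ) (hAB : ∀ ω, -B ω ≤ A ω)
    {u₀ e : ℝ} (h : e - u₀ = ∫ ω, A ω ∂μ) :
    u₀ ≤ (∫ ω, B ω ∂μ) + e := by
  have hmono : -∫ ω, B ω ∂μ ≤ ∫ ω, A ω ∂μ := by
    rw [← integral_neg]
    exact integral_mono hB.neg hA hAB
  linarith

theorem verification_argument_general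
    {S Ω Pi Psi : Type*} [MeasurableSpace Ω] [Nonempty Psi]
    (T : ℝ) (hT : 0 < T)
    (g : S → ℝ) (u : ℝ → S → ℝ) (hterm : ∀ y, u T y = g y)
    (x : S)
    (π₀ : Pi)
    (P : Psi → Measure Ω)
    (ξ : ℝ → Ω → S)
    -- `D t ω` is `u'(t, ξ_t(ω))`; `Q ψ t ω` is `∫_S u(t,y) q(dy|t,ξ_t(ω),π₀,ψ)`;
    -- `R ψ t ω` is `∫∫ r(t,ξ_t(ω),a,b) π₀(da) ψ(db)`.
    (D : ℝ → Ω → ℝ) (Q R : Psi → ℝ → Ω → ℝ)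
    (hineq : ∀ ψ (ω : Ω), ∀ᵐ t ∂(volume.restrict (Set.Icc 0 T)),
      0 ≤ D t ω + R ψ t ω + Q ψ t ω)
    (hintR : ∀ ψ, Integrable (fun ω => ∫ t in (0:ℝ)..T, R ψ t ω) (P ψ))
    (hintDQ : ∀ ψ, Integrable (fun ω => ∫ t in (0:ℝ)..T, (D t ω + Q ψ t ω)) (P ψ))
    (hintRt : ∀ ψ ω, IntegrableOn (fun t => R ψ t ω) (Set.Icc 0 T))
    (hintDQt : ∀ ψ ω, IntegrableOn (fun t => D t ω + Q ψ t ω) (Set.Icc 0 T))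
    (hdynkin : ∀ ψ, (∫ ω, u T (ξ T ω) ∂(P ψ)) - u 0 x
      = ∫ ω, (∫ t in (0:ℝ)..T, (D t ω + Q ψ t ω)) ∂(P ψ))
    (W : Pi → Psi → ℝ)
    (hW : ∀ ψ, W π₀ ψ
      = (∫ ω, (∫ t in (0:ℝ)..T, R ψ t ω) ∂(P ψ)) + ∫ ω, g (ξ T ω) ∂(P ψ))
    (hLbdd : BddAbove (Set.range fun p : Pi => ⨅ ψ, W p ψ)) :
    (∀ ψ, u 0 x ≤ W π₀ ψ) ∧
    u 0 x ≤ (⨅ ψ, W π₀ ψ) ∧ (⨅ ψ, W π₀ ψ) ≤ ⨆ p : Pi, ⨅ ψ, W p ψ := by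
  have hbound : ∀ ψ, u 0 x ≤ W π₀ ψ := by
    intro ψ
    have hpath : ∀ ω, -(∫ t in (0:ℝ)..T, R ψ t ω) ≤ ∫ t in (0:ℝ)..T, (D t ω + Q ψ t ω) :=
      fun ω => neg_intervalIntegral_le_of_nonneg_add hT.le (hintRt ψ ω) (hintDQt ψ ω) <| by
        filter_upwards [hineq ψ ω] with t ht
        linarith
    have hdynkin' := hdynkin ψ
    simp only [hterm] at hdynkin'
    rw [hW ψ]
    exact le_integral_add_of_sub_eq_integral (hintDQ ψ) (hintR ψ) hpath hdynkin'
  exact ⟨hbound, le_ciInf hbound, le_ciSup hLbdd π₀⟩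

/-- Verification argument (Theorem 4.1): if `u(T,·) = g`, the differential inequality
`u' + r̄ + Qu ≥ 0` holds along the process for every opponent policy, and the Dynkin
formula holds, then `u(0,x) ≤ W(x,π₀,ψ)` for every `ψ`, hence
`u(0,x) ≤ inf_ψ W(x,π₀,ψ) ≤ L(x) = sup_π inf_ψ W(x,π,ψ)`. -/
theorem verification_argument
    {S Ω Pi Psi : Type*} [MeasurableSpace Ω] [Nonempty Pi] [Nonempty Psi]
    (T : ℝ) (hT : 0 < T)
    (g : S → ℝ) (u : ℝ → S → ℝ) (hterm : ∀ y, u T y = g y)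
    (x : S)
    (π₀ : Pi)
    (P : Psi → Measure Ω) (hP : ∀ ψ, IsProbabilityMeasure (P ψ))
    (ξ : ℝ → Ω → S)
    -- `D t ω` is `u'(t, ξ_t(ω))`; `Q ψ t ω` is `∫_S u(t,y) q(dy|t,ξ_t(ω),π₀,ψ)`;
    -- `R ψ t ω` is `∫∫ r(t,ξ_t(ω),a,b) π₀(da) ψ(db)`.
    (D : ℝ → Ω → ℝ) (Q R : Psi → ℝ → Ω → ℝ)
    (hineq : ∀ ψ (ω : Ω), ∀ᵐ t ∂(volume.restrict (Set.Icc 0 T)),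
      0 ≤ D t ω + R ψ t ω + Q ψ t ω)
    (hintR : ∀ ψ, Integrable (fun ω => ∫ t in (0:ℝ)..T, R ψ t ω) (P ψ))
    (hintDQ : ∀ ψ, Integrable (fun ω => ∫ t in (0:ℝ)..T, (D t ω + Q ψ t ω)) (P ψ))
    (hintRt : ∀ ψ ω, IntegrableOn (fun t => R ψ t ω) (Set.Icc 0 T))
    (hintDQt : ∀ ψ ω, IntegrableOn (fun t => D t ω + Q ψ t ω) (Set.Icc 0 T))
    (hintg : ∀ ψ, Integrable (fun ω => g (ξ T ω)) (P ψ))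
    (hdynkin : ∀ ψ, (∫ ω, u T (ξ T ω) ∂(P ψ)) - u 0 x
      = ∫ ω, (∫ t in (0:ℝ)..T, (D t ω + Q ψ t ω)) ∂(P ψ))
    (W : Pi → Psi → ℝ)
    (hW : ∀ ψ, W π₀ ψ
      = (∫ ω, (∫ t in (0:ℝ)..T, R ψ t ω) ∂(P ψ)) + ∫ ω, g (ξ T ω) ∂(P ψ))
    (hWbelow : ∀ p : Pi, BddBelow (Set.range fun ψ => W p ψ))
    (hLbdd : BddAbove (Set.range fun p : Pi => ⨅ ψ, W p ψ)) :
    (∀ ψ, u 0 x ≤ W π₀ ψ) ∧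
    u 0 x ≤ (⨅ ψ, W π₀ ψ) ∧ (⨅ ψ, W π₀ ψ) ≤ ⨆ p : Pi, ⨅ ψ, W p ψ :=
  verification_argument_general T hT g u hterm x π₀ P ξ D Q R hineq hintR hintDQ hintRt hintDQt
    hdynkin W hW hLbdd
end
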